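/- Let f : ℂ → ℂ be a smooth orientation-preserving diffeomorphism that is symplectic, i.e., |f_z|² − |f_{z̄}|² = 1 everywhere. Then the 1-form η = 2 Im(z̄ dz − f̄ df) on ℂ is closed, so there exists φ : ℂ → ℝ with dφ = η, and the map F(z,t) = (f(z), t + φ(z)) on ℂ × ℝ satisfies F*ω = ω where ω = dt + 2 Im(z̄ dz). Moreover the Beltrami coefficient of F with respect to the Heisenberg complex horizontal field Z = ∂_z + i z̄ ∂_t equals μ_f(z) = f_{z̄}/f_z, i.e., (Z̄f)/(Zf) (z,t) = f_{z̄}(z)/f_z(z). -/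

import Mathlib

/-- Wirtinger derivative f_z = (∂_x f − i ∂_y f)/2. -/
noncomputable def wz (f : ℂ → ℂ) (z : ℂ) : ℂ :=
  (fderiv ℝ f z 1 - Complex.I * fderiv ℝ f z Complex.I) / 2

/-- Wirtinger derivative f_z̄ = (∂_x f + i ∂_y f)/2. -/
noncomputable def wzb (f : ℂ → ℂ) (z : ℂ) : ℂ :=
  (fderiv ℝ f z 1 + Complex.I * fderiv ℝ f z Complex.I) / 2

/-- Evaluation of the 1-form η = 2 Im(z̄ dz − f̄ df) at z on the tangent vector v. -/
noncomputable def etaEval (f : ℂ → ℂ) (z v : ℂ) : ℝ :=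
  2 * (star z * v - star (f z) * fderiv ℝ f z v).im

/-- Evaluation of ω = dt + 2 Im(z̄ dz) on the tangent vector (v,τ). -/
noncomputable def omegaH (z v : ℂ) (τ : ℝ) : ℝ := τ + 2 * (star z * v).im

/-- Heisenberg horizontal field Z = ∂_z + i z̄ ∂_t applied to g : ℂ × ℝ → ℂ. -/
noncomputable def ZH (g : ℂ × ℝ → ℂ) (p : ℂ × ℝ) : ℂ :=
  (fderiv ℝ g p (1, 0) - Complex.I * fderiv ℝ g p (Complex.I, 0)) / 2 +
    Complex.I * star p.1 * fderiv ℝ g p (0, 1)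

/-- Z̄ = ∂_z̄ − i z ∂_t applied to g : ℂ × ℝ → ℂ. -/
noncomputable def ZbH (g : ℂ × ℝ → ℂ) (p : ℂ × ℝ) : ℂ :=
  (fderiv ℝ g p (1, 0) + Complex.I * fderiv ℝ g p (Complex.I, 0)) / 2 -
    Complex.I * p.1 * fderiv ℝ g p (0, 1)

open Complex ContinuousLinearMap

section Aux

/-- real-linear decomposition of a CLM ℂ →L[ℝ] E -/
lemma clm_decomp {E : Type*} [NormedAddCommGroup E] [NormedSpace ℝ E]
    (L : ℂ →L[ℝ] E) (u : ℂ) : L u = u.re • L 1 + u.im • L Complex.I := by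
  have : u = u.re • (1 : ℂ) + u.im • Complex.I := by
    simp [Complex.real_smul, Complex.re_add_im]
  rw [← map_smul, ← map_smul, ← map_add, ← this]

lemma jac_eq (a b : ℂ)
    (h : (‖(a - Complex.I * b) / 2‖) ^ 2
        - (‖(a + Complex.I * b) / 2‖) ^ 2 = 1) :
    ((starRingEnd ℂ) a * b).im = 1 := by
  rw [Complex.sq_norm, Complex.sq_norm] at h
  simp only [Complex.normSq_apply, Complex.div_re, Complex.div_im, Complex.normSq_apply,
    Complex.sub_re, Complex.sub_im, Complex.add_re, Complex.add_im, Complex.mul_re,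
    Complex.mul_im, Complex.I_re, Complex.I_im, Complex.re_ofNat, Complex.im_ofNat] at h
  simp only [Complex.mul_im, Complex.conj_re, Complex.conj_im]
  linear_combination h

lemma key_alg (a b u v : ℂ) (h : ((starRingEnd ℂ) a * b).im = 1) :
    ((starRingEnd ℂ) (u.re • a + u.im • b) * (v.re • a + v.im • b)).im
      = ((starRingEnd ℂ) u * v).im := by
  simp only [Complex.mul_im, Complex.add_re, Complex.add_im, Complex.conj_re, Complex.conj_im,
    Complex.real_smul, Complex.ofReal_re, Complex.ofReal_im, Complex.mul_re] at h ⊢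
  linear_combination (u.re * v.im - u.im * v.re) * h

noncomputable def mval (a : ℂ) : ℂ →L[ℝ] ℂ := ContinuousLinearMap.mul ℝ ℂ a

noncomputable def conjL : ℂ →L[ℝ] ℂ := Complex.conjCLE.toContinuousLinearMap

@[simp] lemma conjL_apply (z : ℂ) : conjL z = star z := rfl

@[simp] lemma mval_apply (a b : ℂ) : mval a b = a * b := rfl

variable {f : ℂ → ℂ}

/-- the symplectic hypothesis implies Im(conj f_x * f_y) = 1 and hence
`Im(conj (df u) * df v) = Im(conj u * v)` for all u v. -/
lemma df_im (hs : ∀ z, (‖wz f z‖) ^ 2 - (‖wzb f z‖) ^ 2 = 1)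
    (w u v : ℂ) :
    ((starRingEnd ℂ) (fderiv ℝ f w u) * fderiv ℝ f w v).im
      = ((starRingEnd ℂ) u * v).im := by
  have h1 : ((starRingEnd ℂ) (fderiv ℝ f w 1) * fderiv ℝ f w Complex.I).im = 1 := by
    refine jac_eq _ _ ?_
    simpa [wz, wzb] using hs w
  rw [clm_decomp (fderiv ℝ f w) u, clm_decomp (fderiv ℝ f w) v]
  exact key_alg _ _ u v h1

lemma clairaut (hf : ContDiff ℝ (⊤ : ℕ∞) f) (w u v : ℂ) :
    fderiv ℝ (fderiv ℝ f) w u v = fderiv ℝ (fderiv ℝ f) w v u := by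
  have hdf : ContDiff ℝ 1 (fderiv ℝ f) := hf.fderiv_right (m := 1) (by exact WithTop.coe_le_coe.mpr le_top)
  exact second_derivative_symmetric (fun y => (hf.differentiable (by simp) y).hasFDerivAt)
    ((hdf.differentiable one_ne_zero w).hasFDerivAt) u v

noncomputable def Lform (f : ℂ → ℂ) (z v : ℂ) : ℂ →L[ℝ] ℝ :=
  (2:ℝ) • (Complex.imCLM.comp
    ((mval v).comp conjL - (mval (fderiv ℝ f z v)).comp (conjL.comp (fderiv ℝ f z))
      - (mval (star (f z))).comp ((fderiv ℝ (fderiv ℝ f) z).flip v)))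

lemma Lform_apply (f : ℂ → ℂ) (z v u : ℂ) :
    Lform f z v u = 2 * ((star u * v) - (star (fderiv ℝ f z u) * fderiv ℝ f z v)
      - (star (f z) * fderiv ℝ (fderiv ℝ f) z u v)).im := by
  simp [Lform, Complex.sub_im, mul_comm]

lemma hasFDerivAt_eta (hf : ContDiff ℝ (⊤ : ℕ∞) f) (z v : ℂ) :
    HasFDerivAt (fun w => etaEval f w v) (Lform f z v) z := by
  have hdiff : Differentiable ℝ f := hf.differentiable (by simp)
  have hdf : ContDiff ℝ 1 (fderiv ℝ f) := hf.fderiv_right (by exact WithTop.coe_le_coe.mpr le_top)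
  have h1 : HasFDerivAt (fun w : ℂ => star w * v) ((mval v).comp conjL) z := by
    refine HasFDerivAt.congr_of_eventuallyEq (((mval v).comp conjL).hasFDerivAt) ?_
    filter_upwards with w
    simp [mul_comm]
  have hfd : HasFDerivAt f (fderiv ℝ f z) z := (hdiff z).hasFDerivAt
  have h2 : HasFDerivAt (fun w => star (f w)) (conjL.comp (fderiv ℝ f z)) z := by
    exact conjL.hasFDerivAt.comp z hfd
  have h3 : HasFDerivAt (fun w => fderiv ℝ f w) (fderiv ℝ (fderiv ℝ f) z) z :=
    (hdf.differentiable one_ne_zero z).hasFDerivAt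
  have h4 : HasFDerivAt (fun w => fderiv ℝ f w v) ((fderiv ℝ (fderiv ℝ f) z).flip v) z := by
    simpa using h3.clm_apply (hasFDerivAt_const v z)
  have h5 := h2.mul h4
  have h7 := Complex.imCLM.hasFDerivAt.comp z (h1.sub h5)
  have h8 := h7.const_mul (2:ℝ)
  refine h8.congr_fderiv ?_
  ext u
  simp [Lform, Complex.sub_im, Complex.add_im, Complex.mul_im]
  ring

noncomputable def Dform (f : ℂ → ℂ) (t : ℝ) (x : ℂ) : ℂ →L[ℝ] ℝ :=
  (2:ℝ) • (Complex.imCLM.comp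
    ( t • ((mval x).comp conjL)
    + t • (mval (star x))
    - t • ((mval (fderiv ℝ f (t•x) x)).comp (conjL.comp (fderiv ℝ f (t•x))))
    - t • ((mval (star (f (t•x)))).comp ((fderiv ℝ (fderiv ℝ f) (t•x)).flip x))
    - (mval (star (f (t•x)))).comp (fderiv ℝ f (t•x)) ))

lemma Dform_apply (f : ℂ → ℂ) (t : ℝ) (x u : ℂ) :
    Dform f t x u = 2 * ( t • (star u * x) + t • (star x * u)
      - t • (star (fderiv ℝ f (t•x) u) * fderiv ℝ f (t•x) x)
      - t • (star (f (t•x)) * fderiv ℝ (fderiv ℝ f) (t•x) u x)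
      - star (f (t•x)) * fderiv ℝ f (t•x) u ).im := by
  simp [Dform, Complex.sub_im, Complex.add_im, mul_comm]

lemma hasFDerivAt_eta_scaled (hf : ContDiff ℝ (⊤ : ℕ∞) f) (t : ℝ) (x : ℂ) :
    HasFDerivAt (fun w => etaEval f (t•w) w) (Dform f t x) x := by
  have hdiff : Differentiable ℝ f := hf.differentiable (by simp)
  have hdf : ContDiff ℝ 1 (fderiv ℝ f) := hf.fderiv_right (by exact WithTop.coe_le_coe.mpr le_top)
  set S : ℂ →L[ℝ] ℂ := t • ContinuousLinearMap.id ℝ ℂ with hS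
  have hSap : ∀ w : ℂ, S w = t • w := fun w => rfl
  have hs : HasFDerivAt (fun w : ℂ => t • w) S x := S.hasFDerivAt
  have h1a : HasFDerivAt (fun w : ℂ => star (t • w)) (conjL.comp S) x := by
    refine HasFDerivAt.congr_of_eventuallyEq ((conjL.comp S).hasFDerivAt) ?_
    filter_upwards with w
    simp [hSap]
  have h1 := h1a.mul (hasFDerivAt_id x)
  have h2 : HasFDerivAt (fun w => f (t • w)) ((fderiv ℝ f (t•x)).comp S) x :=
    ((hdiff (t • x)).hasFDerivAt).comp x hs
  have h2' : HasFDerivAt (fun w => star (f (t • w)))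
      (conjL.comp ((fderiv ℝ f (t•x)).comp S)) x := by
    exact conjL.hasFDerivAt.comp x h2
  have h3 : HasFDerivAt (fun w => fderiv ℝ f (t • w))
      ((fderiv ℝ (fderiv ℝ f) (t•x)).comp S) x :=
    ((hdf.differentiable one_ne_zero (t • x)).hasFDerivAt).comp x hs
  have h4 := h3.clm_apply (hasFDerivAt_id x)
  have h5 := h2'.mul h4
  have h7 := Complex.imCLM.hasFDerivAt.comp x (h1.sub h5)
  have h8 := h7.const_mul (2:ℝ)
  have h9 : (fun w => etaEval f (t•w) w)
      = fun w => 2 * Complex.im (star (t•w) * w - star (f (t•w)) * fderiv ℝ f (t•w) w) := by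
    funext w; simp [etaEval]
  rw [h9]
  refine h8.congr_fderiv ?_
  ext u
  simp [Dform, hSap, Complex.sub_im, Complex.add_im, Complex.mul_im, ← Complex.real_smul,
    map_smul, Complex.smul_re, Complex.smul_im, smul_eq_mul]
  ring

lemma cont_Dform (hf : ContDiff ℝ (⊤ : ℕ∞) f) :
    Continuous (fun p : ℝ × ℂ => Dform f p.1 p.2) := by
  have hcf : Continuous f := hf.continuous
  have hcdf : Continuous (fderiv ℝ f) := hf.continuous_fderiv (by simp)
  have hcd2f : Continuous (fderiv ℝ (fderiv ℝ f)) :=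
    (hf.fderiv_right (m := 1) (by exact WithTop.coe_le_coe.mpr le_top)).continuous_fderiv one_ne_zero
  have hsm : Continuous (fun p : ℝ × ℂ => p.1 • p.2) := continuous_fst.smul continuous_snd
  have hmul : Continuous (fun a : ℂ => mval a) := (ContinuousLinearMap.mul ℝ ℂ).continuous
  have hdfp : Continuous (fun p : ℝ × ℂ => fderiv ℝ f (p.1 • p.2)) := hcdf.comp hsm
  have hd2fp : Continuous (fun p : ℝ × ℂ => fderiv ℝ (fderiv ℝ f) (p.1 • p.2)) := hcd2f.comp hsm
  have hfp : Continuous (fun p : ℝ × ℂ => f (p.1 • p.2)) := hcf.comp hsm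
  have c1 : Continuous (fun p : ℝ × ℂ => p.1 • ((mval p.2).comp conjL)) :=
    continuous_fst.smul ((hmul.comp continuous_snd).clm_comp continuous_const)
  have c2 : Continuous (fun p : ℝ × ℂ => p.1 • (mval (star p.2))) :=
    continuous_fst.smul (hmul.comp (continuous_star.comp continuous_snd))
  have c3 : Continuous (fun p : ℝ × ℂ =>
      p.1 • ((mval (fderiv ℝ f (p.1 • p.2) p.2)).comp
        (conjL.comp (fderiv ℝ f (p.1 • p.2))))) :=
    continuous_fst.smul ((hmul.comp (hdfp.clm_apply continuous_snd)).clm_comp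
      (continuous_const.clm_comp hdfp))
  have hflip : Continuous (fun p : ℝ × ℂ => (fderiv ℝ (fderiv ℝ f) (p.1 • p.2)).flip) :=
    (ContinuousLinearMap.flipₗᵢ ℝ ℂ ℂ ℂ).continuous.comp hd2fp
  have c4 : Continuous (fun p : ℝ × ℂ =>
      p.1 • ((mval (star (f (p.1 • p.2)))).comp
        ((fderiv ℝ (fderiv ℝ f) (p.1 • p.2)).flip p.2))) :=
    continuous_fst.smul ((hmul.comp (continuous_star.comp hfp)).clm_comp
      (hflip.clm_apply continuous_snd))
  have c5 : Continuous (fun p : ℝ × ℂ =>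
      (mval (star (f (p.1 • p.2)))).comp (fderiv ℝ f (p.1 • p.2))) :=
    (hmul.comp (continuous_star.comp hfp)).clm_comp hdfp
  exact (continuous_const (y := (2:ℝ))).smul
    (continuous_const.clm_comp ((((c1.add c2).sub c3).sub c4).sub c5))

lemma cont_eta2 (hf : ContDiff ℝ (⊤ : ℕ∞) f) :
    Continuous (fun p : ℝ × ℂ => etaEval f (p.1 • p.2) p.2) := by
  have hcf : Continuous f := hf.continuous
  have hcdf : Continuous (fderiv ℝ f) := hf.continuous_fderiv (by simp)
  have hsm : Continuous (fun p : ℝ × ℂ => p.1 • p.2) := continuous_fst.smul continuous_snd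
  have h1 : Continuous (fun p : ℝ × ℂ => star (p.1 • p.2) * p.2) :=
    (continuous_star.comp hsm).mul continuous_snd
  have h2 : Continuous (fun p : ℝ × ℂ => star (f (p.1 • p.2)) * fderiv ℝ f (p.1 • p.2) p.2) :=
    (continuous_star.comp (hcf.comp hsm)).mul ((hcdf.comp hsm).clm_apply continuous_snd)
  unfold etaEval
  exact (continuous_const.mul (Complex.continuous_im.comp (h1.sub h2)))

end Aux

section Phi

variable {f : ℂ → ℂ}

lemma hasFDerivAt_phi (hf : ContDiff ℝ (⊤ : ℕ∞) f) (z : ℂ) :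
    HasFDerivAt (fun w => ∫ t in (0:ℝ)..1, etaEval f (t • w) w)
      (∫ t in (0:ℝ)..1, Dform f t z) z := by
  have hce := cont_eta2 hf
  have hcD := cont_Dform hf
  obtain ⟨C, hC⟩ := ((isCompact_Icc (a := (0:ℝ)) (b := 1)).prod
      (isCompact_closedBall z 1)).exists_bound_of_continuousOn hcD.continuousOn
  refine intervalIntegral.hasFDerivAt_integral_of_dominated_of_fderiv_le
    (F := fun x t => etaEval f (t • x) x) (F' := fun x t => Dform f t x)
    (bound := fun _ => C) (Metric.ball_mem_nhds z one_pos) ?_ ?_ ?_ ?_ ?_ ?_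
  · exact Filter.Eventually.of_forall fun x =>
      (hce.comp (continuous_id.prodMk continuous_const)).aestronglyMeasurable
  · exact (hce.comp (continuous_id.prodMk continuous_const)).intervalIntegrable 0 1
  · exact (hcD.comp (continuous_id.prodMk continuous_const)).aestronglyMeasurable
  · refine Filter.Eventually.of_forall fun t ht x hx => hC (t, x) ?_
    rw [Set.uIoc_of_le zero_le_one] at ht
    exact Set.mem_prod.2 ⟨Set.Ioc_subset_Icc_self ht, Metric.ball_subset_closedBall hx⟩
  · exact intervalIntegrable_const
  · exact Filter.Eventually.of_forall fun t ht x hx => hasFDerivAt_eta_scaled hf t x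

lemma integral_Dform_apply (hf : ContDiff ℝ (⊤ : ℕ∞) f)
    (hs : ∀ z, (‖wz f z‖) ^ 2 - (‖wzb f z‖) ^ 2 = 1) (z v : ℂ) :
    (∫ t in (0:ℝ)..1, Dform f t z) v = etaEval f z v := by
  have hcD := cont_Dform hf
  have hInt : IntervalIntegrable (fun t => Dform f t z) MeasureTheory.volume 0 1 :=
    (hcD.comp (continuous_id.prodMk continuous_const)).intervalIntegrable 0 1
  rw [ContinuousLinearMap.intervalIntegral_apply hInt v]
  have hderiv : ∀ t ∈ Set.uIcc (0:ℝ) 1, HasDerivAt (fun s => s * etaEval f (s • z) v)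
      ((Dform f t z) v) t := by
    intro t _
    have hcurve : HasDerivAt (fun s : ℝ => s • z) z t := by
      simpa using (hasDerivAt_id t).smul_const z
    have hinner : HasDerivAt (fun s : ℝ => etaEval f (s • z) v) ((Lform f (t • z) v) z) t :=
      (hasFDerivAt_eta hf (t • z) v).comp_hasDerivAt (l := fun w => etaEval f w v) (f := fun s : ℝ => s • z) t hcurve
    have hmul := (hasDerivAt_id t).mul hinner
    refine hmul.congr_deriv ?_
    rw [Dform_apply, Lform_apply]
    simp only [etaEval]
    rw [clairaut hf (t • z) v z]
    simp only [Complex.star_def, Complex.sub_im, Complex.add_im, Complex.smul_im]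
    rw [df_im hs (t • z) v z, df_im hs (t • z) z v]
    simp only [Complex.mul_im, Complex.conj_re, Complex.conj_im, Complex.smul_re,
      Complex.smul_im, smul_eq_mul, id_eq]
    ring
  have hcont : Continuous fun t => (Dform f t z) v :=
    (hcD.comp (continuous_id.prodMk continuous_const)).clm_apply continuous_const
  rw [intervalIntegral.integral_eq_sub_of_hasDerivAt hderiv (hcont.intervalIntegrable 0 1)]
  simp

end Phi

/-- Lifting theorem for the Heisenberg group: if f is a smooth orientation-preserving
symplectic diffeomorphism of ℂ (|f_z|² − |f_z̄|² = 1), then η = 2 Im(z̄ dz − f̄ df)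
is closed, so η = dφ for some φ : ℂ → ℝ, and F(z,t) = (f(z), t + φ(z)) satisfies
F*ω = ω; moreover the Beltrami coefficient of F equals μ_f: (Z̄f)/(Zf) = f_z̄/f_z. -/
theorem stmt_16 :
    ∀ f : ℂ → ℂ, ContDiff ℝ (⊤ : ℕ∞) f → Function.Bijective f →
      (∀ z, (‖wz f z‖) ^ 2 - (‖wzb f z‖) ^ 2 = 1) →
      (∀ z : ℂ,
        fderiv ℝ (fun w => etaEval f w Complex.I) z 1 =
          fderiv ℝ (fun w => etaEval f w 1) z Complex.I) ∧
      ∃ φ : ℂ → ℝ,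
        (∀ z v : ℂ, fderiv ℝ φ z v = etaEval f z v) ∧
        (∀ p u : ℂ × ℝ,
          omegaH (f p.1)
            (fderiv ℝ (fun q : ℂ × ℝ => ((f q.1, q.2 + φ q.1) : ℂ × ℝ)) p u).1
            (fderiv ℝ (fun q : ℂ × ℝ => ((f q.1, q.2 + φ q.1) : ℂ × ℝ)) p u).2 =
            omegaH p.1 u.1 u.2) ∧
        (∀ p : ℂ × ℝ,
          ZbH (fun q => f q.1) p / ZH (fun q => f q.1) p = wzb f p.1 / wz f p.1) := by
  intro f hf hbij hs
  constructor
  · -- closedness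
    intro z
    rw [(hasFDerivAt_eta hf z Complex.I).fderiv, (hasFDerivAt_eta hf z 1).fderiv,
      Lform_apply, Lform_apply]
    rw [clairaut hf z 1 Complex.I]
    simp only [Complex.star_def, Complex.sub_im]
    rw [df_im hs z 1 Complex.I, df_im hs z Complex.I 1]
    simp only [Complex.mul_im, Complex.conj_re, Complex.conj_im, Complex.I_re, Complex.I_im,
      Complex.one_re, Complex.one_im]
    ring
  · refine ⟨fun w => ∫ t in (0:ℝ)..1, etaEval f (t • w) w, ?_, ?_, ?_⟩
    · intro z v
      rw [(hasFDerivAt_phi hf z).fderiv]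
      exact integral_Dform_apply hf hs z v
    · intro p u
      have hdfp : HasFDerivAt f (fderiv ℝ f p.1) p.1 := (hf.differentiable (by simp) p.1).hasFDerivAt
      have h1 : HasFDerivAt (fun q : ℂ × ℝ => f q.1)
          ((fderiv ℝ f p.1).comp (ContinuousLinearMap.fst ℝ ℂ ℝ)) p := by
        exact hdfp.comp p hasFDerivAt_fst
      have h2 : HasFDerivAt (fun q : ℂ × ℝ => q.2 + ∫ t in (0:ℝ)..1, etaEval f (t • q.1) q.1)
          ((ContinuousLinearMap.snd ℝ ℂ ℝ) +
            (∫ t in (0:ℝ)..1, Dform f t p.1).comp (ContinuousLinearMap.fst ℝ ℂ ℝ)) p := by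
        refine HasFDerivAt.add hasFDerivAt_snd ?_
        exact (hasFDerivAt_phi hf p.1).comp p hasFDerivAt_fst
      have hF := h1.prodMk h2
      rw [hF.fderiv]
      simp only [ContinuousLinearMap.prod_apply, ContinuousLinearMap.comp_apply,
        ContinuousLinearMap.coe_fst', ContinuousLinearMap.coe_snd',
        ContinuousLinearMap.add_apply]
      rw [integral_Dform_apply hf hs p.1 u.1]
      simp only [omegaH, etaEval, Complex.sub_im]
      ring
    · intro p
      have hdfp : HasFDerivAt f (fderiv ℝ f p.1) p.1 := (hf.differentiable (by simp) p.1).hasFDerivAt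
      have hg : fderiv ℝ (fun q : ℂ × ℝ => f q.1) p
          = (fderiv ℝ f p.1).comp (ContinuousLinearMap.fst ℝ ℂ ℝ) := by
        have : HasFDerivAt (fun q : ℂ × ℝ => f q.1)
            ((fderiv ℝ f p.1).comp (ContinuousLinearMap.fst ℝ ℂ ℝ)) p := by
          exact hdfp.comp p hasFDerivAt_fst
        exact this.fderiv
      simp [ZH, ZbH, hg, wz, wzb]
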